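/- arXiv:1908.05576 — 4 statements merged into one kernel-verified Lean document; each statement's English description precedes it below -/
import Mathlib

section
/- The polynomial R_h(z1,z2) = (4/19)(z1 - z2)(z1^2 + z1*z2 + z2^2)(z1^6 - 11*z1^3*z2^3 + z2^6) lies in the kernel of the adjoint operator X0* = z2 ∂²/∂z1² + z1 ∂²/∂z2², i.e. z2 * ∂²R_h/∂z1² + z1 * ∂²R_h/∂z2² = 0. -/
/-! Expanded, `Rh a b = 4/19 * (a^9 - 12 a^6 b^3 + 12 a^3 b^6 - b^9)` is antisymmetric, so both
second partial derivatives come from `∂₁² Rh (a, b) = 288/19 * a * (a^6 - 5 a^3 b^3 + b^6)`.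
Since `b * ∂₁² Rh (a, b)` is symmetric in `a, b`, the two terms of `X0* Rh` cancel. -/

noncomputable def Rh (z1 z2 : ℝ) : ℝ :=
  (4/19) * (z1 - z2) * (z1^2 + z1*z2 + z2^2) * (z1^6 - 11*z1^3*z2^3 + z2^6)

lemma Rh_eq (a b : ℝ) : Rh a b = 4/19 * (a^9 - 12*b^3*a^6 + 12*b^6*a^3 - b^9) := by
  unfold Rh; ring

lemma Rh_swap (a b : ℝ) : Rh b a = -Rh a b := by
  simp only [Rh_eq]; ring

lemma iteratedDeriv_two_Rh_fst (a b : ℝ) :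
    iteratedDeriv 2 (fun t => Rh t b) a = 288/19 * a * (a^6 - 5*a^3*b^3 + b^6) := by
  simp only [Rh_eq]
  rw [iteratedDeriv_const_mul_field, iteratedDeriv_fun_sub (by fun_prop) (by fun_prop),
    iteratedDeriv_fun_add (by fun_prop) (by fun_prop),
    iteratedDeriv_fun_sub (by fun_prop) (by fun_prop), iteratedDeriv_const_mul_field,
    iteratedDeriv_const_mul_field]
  simp only [iteratedDeriv_pow, iteratedDeriv_const]
  norm_num [Nat.descFactorial]
  ring

theorem stmt1 (z1 z2 : ℝ) :
    z2 * iteratedDeriv 2 (fun t => Rh t z2) z1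
      + z1 * iteratedDeriv 2 (fun t => Rh z1 t) z2 = 0 := by
  have h_swap : (fun t => Rh z1 t) = fun t => -Rh t z1 := funext fun t => Rh_swap t z1
  rw [h_swap, iteratedDeriv_fun_neg, iteratedDeriv_two_Rh_fst, iteratedDeriv_two_Rh_fst]
  ring
end

section
/- Every homogeneous polynomial p(z1,z2) of degree 9 satisfying z2 * ∂²p/∂z1² + z1 * ∂²p/∂z2² = 0 is a scalar multiple of (z1 - z2)(z1^2 + z1*z2 + z2^2)(z1^6 - 11*z1^3*z2^3 + z2^6). -/
/-!
Comparing coefficients of `z₁^(i+1) z₂^(j+1)` in `X₀* p = 0` ties the coefficient of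
`z₁^(i+3) z₂^j` to that of `z₁^i z₂^(j+3)`, so the ten coefficients of a degree-9 kernel element
split into three chains according to the exponent of `z₁` mod 3. The coefficients of `z₁^8` and
`z₂^8` involve only one term each and force those of `z₁^7 z₂^2` and `z₁^2 z₂^7` to vanish, which
kills the chains of residues 1 and 2. The remaining chain `z₁^9, z₁^6 z₂^3, z₁^3 z₂^6, z₂^9` is
fixed by its first entry, in the ratios `1 : -12 : 12 : -1` of the expanded product.
-/

open MvPolynomial

namespace MvPolynomial

section CommSemiring

variable {R : Type*} [CommSemiring R]

noncomputable def bideg (i j : ℕ) : Fin 2 →₀ ℕ := Finsupp.single 0 i + Finsupp.single 1 j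

@[simp] lemma bideg_apply_zero (i j : ℕ) : bideg i j 0 = i := by simp [bideg]

@[simp] lemma bideg_apply_one (i j : ℕ) : bideg i j 1 = j := by simp [bideg]

lemma eq_bideg (d : Fin 2 →₀ ℕ) : d = bideg (d 0) (d 1) := by
  ext k; fin_cases k <;> simp

lemma single_zero_add_bideg (i j : ℕ) : Finsupp.single 0 1 + bideg i j = bideg (i + 1) j := by
  ext k; fin_cases k <;> simp [add_comm]

lemma single_one_add_bideg (i j : ℕ) : Finsupp.single 1 1 + bideg i j = bideg i (j + 1) := by
  ext k; fin_cases k <;> simp [add_comm]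

lemma weight_one_bideg (i j : ℕ) : Finsupp.weight 1 (bideg i j) = i + j := by
  simp [Finsupp.weight_apply, Finsupp.sum_fintype]

lemma monomial_bideg (i j : ℕ) (a : R) :
    monomial (bideg i j) a = C a * X 0 ^ i * X 1 ^ j := by
  simp [bideg, X_pow_eq_monomial, monomial_mul, C_mul_monomial]

lemma IsHomogeneous.eq_sum_bideg {p : MvPolynomial (Fin 2) R} {n : ℕ} (hp : p.IsHomogeneous n) :
    p = ∑ i ∈ Finset.range (n + 1), monomial (bideg i (n - i)) (coeff (bideg i (n - i)) p) := by
  have hsupp : p.support ⊆ (Finset.range (n + 1)).image fun i => bideg i (n - i) := by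
    intro d hd
    have hdeg : d 0 + d 1 = n := by
      rw [← hp (mem_support_iff.mp hd), eq_bideg d, weight_one_bideg]; simp
    refine Finset.mem_image.mpr ⟨d 0, by simp; omega, ?_⟩
    conv_rhs => rw [eq_bideg d]
    congr 1; omega
  have hinj : Set.InjOn (fun i => bideg i (n - i)) (Finset.range (n + 1)) :=
    fun i _ j _ h => by simpa using congrArg (· 0) h
  conv_lhs => rw [p.as_sum, Finset.sum_subset hsupp fun d _ hd => by
    rw [notMem_support_iff.mp hd, monomial_zero]]
  exact Finset.sum_image hinj

lemma coeff_bideg_succ_X_zero_mul (p : MvPolynomial (Fin 2) R) (i j : ℕ) :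
    coeff (bideg (i + 1) j) (X 0 * p) = coeff (bideg i j) p := by
  rw [← single_zero_add_bideg, coeff_X_mul]

lemma coeff_bideg_succ_X_one_mul (p : MvPolynomial (Fin 2) R) (i j : ℕ) :
    coeff (bideg i (j + 1)) (X 1 * p) = coeff (bideg i j) p := by
  rw [← single_one_add_bideg, coeff_X_mul]

lemma coeff_bideg_zero_left_X_zero_mul (p : MvPolynomial (Fin 2) R) (j : ℕ) :
    coeff (bideg 0 j) (X 0 * p) = 0 := by
  simp [coeff_X_mul']

lemma coeff_bideg_zero_right_X_one_mul (p : MvPolynomial (Fin 2) R) (i : ℕ) :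
    coeff (bideg i 0) (X 1 * p) = 0 := by
  simp [coeff_X_mul']

lemma coeff_bideg_pderiv_zero (p : MvPolynomial (Fin 2) R) (i j : ℕ) :
    coeff (bideg i j) (pderiv 0 p) = coeff (bideg (i + 1) j) p * (i + 1) := by
  rw [coeff_pderiv, add_comm, single_zero_add_bideg, bideg_apply_zero]

lemma coeff_bideg_pderiv_one (p : MvPolynomial (Fin 2) R) (i j : ℕ) :
    coeff (bideg i j) (pderiv 1 p) = coeff (bideg i (j + 1)) p * (j + 1) := by
  rw [coeff_pderiv, add_comm, single_one_add_bideg, bideg_apply_one]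

noncomputable def x0Star (p : MvPolynomial (Fin 2) R) : MvPolynomial (Fin 2) R :=
  X 1 * pderiv 0 (pderiv 0 p) + X 0 * pderiv 1 (pderiv 1 p)

lemma coeff_bideg_succ_succ_x0Star (p : MvPolynomial (Fin 2) R) (i j : ℕ) :
    coeff (bideg (i + 1) (j + 1)) (x0Star p) =
      (i + 3) * (i + 2) * coeff (bideg (i + 3) j) p
        + (j + 3) * (j + 2) * coeff (bideg i (j + 3)) p := by
  rw [x0Star, coeff_add, coeff_bideg_succ_X_one_mul, coeff_bideg_succ_X_zero_mul,
    coeff_bideg_pderiv_zero, coeff_bideg_pderiv_zero, coeff_bideg_pderiv_one,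
    coeff_bideg_pderiv_one]
  push_cast
  ring

lemma coeff_bideg_succ_zero_x0Star (p : MvPolynomial (Fin 2) R) (i : ℕ) :
    coeff (bideg (i + 1) 0) (x0Star p) = 2 * coeff (bideg i 2) p := by
  rw [x0Star, coeff_add, coeff_bideg_zero_right_X_one_mul, coeff_bideg_succ_X_zero_mul,
    coeff_bideg_pderiv_one, coeff_bideg_pderiv_one]
  push_cast
  ring

lemma coeff_bideg_zero_succ_x0Star (p : MvPolynomial (Fin 2) R) (j : ℕ) :
    coeff (bideg 0 (j + 1)) (x0Star p) = 2 * coeff (bideg 2 j) p := by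
  rw [x0Star, coeff_add, coeff_bideg_zero_left_X_zero_mul, coeff_bideg_succ_X_one_mul,
    coeff_bideg_pderiv_zero, coeff_bideg_pderiv_zero]
  push_cast
  ring

end CommSemiring

variable {K : Type*} [Field K] [CharZero K]

lemma coeff_bideg_nine_of_x0Star_eq_zero {p : MvPolynomial (Fin 2) K}
    (hp : x0Star p = 0) :
    coeff (bideg 8 1) p = 0 ∧ coeff (bideg 7 2) p = 0 ∧
      coeff (bideg 6 3) p = -12 * coeff (bideg 9 0) p ∧ coeff (bideg 5 4) p = 0 ∧
      coeff (bideg 4 5) p = 0 ∧ coeff (bideg 3 6) p = 12 * coeff (bideg 9 0) p ∧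
      coeff (bideg 2 7) p = 0 ∧ coeff (bideg 1 8) p = 0 ∧
      coeff (bideg 0 9) p = -coeff (bideg 9 0) p := by
  have rel60 := coeff_bideg_succ_succ_x0Star p 6 0
  have rel33 := coeff_bideg_succ_succ_x0Star p 3 3
  have rel06 := coeff_bideg_succ_succ_x0Star p 0 6
  have rel42 := coeff_bideg_succ_succ_x0Star p 4 2
  have rel15 := coeff_bideg_succ_succ_x0Star p 1 5
  have rel24 := coeff_bideg_succ_succ_x0Star p 2 4
  have rel51 := coeff_bideg_succ_succ_x0Star p 5 1
  have h72 := coeff_bideg_succ_zero_x0Star p 7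
  have h27 := coeff_bideg_zero_succ_x0Star p 7
  simp only [hp, coeff_zero] at rel60 rel33 rel06 rel42 rel15 rel24 rel51 h72 h27
  norm_num at rel60 rel33 rel06 rel42 rel15 rel24 rel51 h72 h27
  have h63 : coeff (bideg 6 3) p = -12 * coeff (bideg 9 0) p := by linear_combination -rel60 / 6
  have h36 : coeff (bideg 3 6) p = 12 * coeff (bideg 9 0) p := by
    linear_combination -rel33 / 30 - h63
  have h09 : coeff (bideg 0 9) p = -coeff (bideg 9 0) p := by
    linear_combination -rel06 / 72 - h36 / 12
  have h45 : coeff (bideg 4 5) p = 0 := by linear_combination -rel42 / 20 - 42 / 20 * h72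
  have h18 : coeff (bideg 1 8) p = 0 := by linear_combination -rel15 / 56 - 12 / 56 * h45
  have h54 : coeff (bideg 5 4) p = 0 := by linear_combination -rel24 / 20 - 42 / 20 * h27
  have h81 : coeff (bideg 8 1) p = 0 := by linear_combination -rel51 / 56 - 12 / 56 * h54
  exact ⟨h81, h72, h63, h54, h45, h36, h27, h18, h09⟩

end MvPolynomial

theorem stmt2 (p : MvPolynomial (Fin 2) ℝ)
    (hhom : p.IsHomogeneous 9)
    (hker : X 1 * pderiv 0 (pderiv 0 p) + X 0 * pderiv 1 (pderiv 1 p) = 0) :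
    ∃ c : ℝ,
      p = c • ((X 0 - X 1) * (X 0 ^ 2 + X 0 * X 1 + X 1 ^ 2)
        * (X 0 ^ 6 - 11 * X 0 ^ 3 * X 1 ^ 3 + X 1 ^ 6)) := by
  obtain ⟨h81, h72, h63, h54, h45, h36, h27, h18, h09⟩ :=
    coeff_bideg_nine_of_x0Star_eq_zero hker
  refine ⟨coeff (bideg 9 0) p, ?_⟩
  conv_lhs => rw [hhom.eq_sum_bideg]
  simp only [Finset.sum_range_succ, Finset.sum_range_zero, Nat.reduceSub, monomial_bideg,
    h81, h72, h63, h54, h45, h36, h27, h18, h09, map_zero, map_mul, map_neg, map_ofNat,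
    smul_eq_C_mul]
  ring
end

section
/- Every polynomial first integral of the vector field X0(z1,z2) = (z2^2, z1^2) (i.e. every polynomial F with z2^2 * ∂F/∂z1 + z1^2 * ∂F/∂z2 = 0) is a polynomial in κ̂ = z1^3 - z2^3. In particular, any homogeneous polynomial first integral of degree not divisible by 3 is zero. -/
/-!
Homogeneous components of a first integral are again first integrals, since the vector field
raises degrees by one. For `F` homogeneous of degree `n`, Euler's identity turns `X₀ F = 0` into
the ODE `(x³ - 1) p' = n x² p` for the dehomogenization `p(x) = F(x, 1)`. As `x³ - 1` is
separable, any polynomial solution of `f p' = c f' p` is divisible by `f`, and the quotient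
solves the same equation with `c - 1`; so `c = k ∈ ℕ` and `p = a f ^ k`. Rehomogenizing gives
`F = a κ̂ ^ k` with `n = 3k`.
-/

namespace Polynomial

variable {K : Type*} [Field K] [CharZero K]

theorem exists_eq_C_mul_pow_of_mul_derivative_eq {f p : K[X]} {c : K} (hf : f.Separable)
    (hf0 : f.natDegree ≠ 0) (hp : p ≠ 0) (h : f * derivative p = C c * derivative f * p) :
    ∃ k : ℕ, c = k ∧ ∃ a : K, p = C a * f ^ k := by
  induction hn : p.natDegree using Nat.strong_induction_on generalizing p c with
  | _ n ih =>
  by_cases hc : c = 0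
  · subst hc
    have hp' : derivative p = 0 := by simpa [hf.ne_zero] using h
    exact ⟨0, by simp, p.coeff 0, by simpa using eq_C_of_derivative_eq_zero hp'⟩
  obtain ⟨q, rfl⟩ : f ∣ p := by
    refine hf.dvd_of_dvd_mul_left ((isUnit_C.2 (Ne.isUnit hc)).dvd_mul_left.1 ?_)
    exact ⟨derivative p, by rw [← mul_assoc, ← h]⟩
  have hq : q ≠ 0 := right_ne_zero_of_mul hp
  have hdeg : q.natDegree < n := by
    rw [← hn, natDegree_mul hf.ne_zero hq]
    omega
  have hq' : f * derivative q = C (c - 1) * derivative f * q := by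
    refine mul_left_cancel₀ hf.ne_zero ?_
    rw [derivative_mul] at h
    rw [C_sub, C_1]
    linear_combination h
  obtain ⟨k, hk, a, rfl⟩ := ih _ hdeg hq hq' rfl
  exact ⟨k + 1, by push_cast; linear_combination hk, a, by ring⟩

end Polynomial

namespace MvPolynomial

section Homogeneous

variable {σ R : Type*} [CommSemiring R]

theorem homogeneousComponent_add_map (L : MvPolynomial σ R →ₗ[R] MvPolynomial σ R) {k : ℕ}
    (hL : ∀ n φ, IsHomogeneous φ n → IsHomogeneous (L φ) (n + k))
    (φ : MvPolynomial σ R) (d : ℕ) :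
    homogeneousComponent (d + k) (L φ) = L (homogeneousComponent d φ) := by
  conv_lhs => rw [← sum_homogeneousComponent φ]
  have hcomp (e : ℕ) : homogeneousComponent (d + k) (L (homogeneousComponent e φ)) =
      if d = e then L (homogeneousComponent e φ) else 0 := by
    rw [homogeneousComponent_of_mem ((mem_homogeneousSubmodule _ _).2
      (hL _ _ (homogeneousComponent_isHomogeneous e φ)))]
    simp only [add_left_inj]
  simp only [map_sum, hcomp, Finset.sum_ite_eq]
  split_ifs with hd
  · rfl
  · rw [homogeneousComponent_eq_zero _ _ (by simpa using hd), map_zero]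

theorem IsHomogeneous.mul_pderiv {φ ψ : MvPolynomial σ R} {n k : ℕ} (hφ : φ.IsHomogeneous n)
    (hψ : ψ.IsHomogeneous (k + 1)) (i : σ) : (ψ * pderiv i φ).IsHomogeneous (n + k) := by
  obtain _ | n := n
  · rw [← totalDegree_zero_iff_isHomogeneous, totalDegree_eq_zero_iff_eq_C] at hφ
    rw [hφ, pderiv_C, mul_zero]
    exact isHomogeneous_zero _ _ _
  · convert hψ.mul (hφ.pderiv (i := i)) using 1
    omega

end Homogeneous

section LieDeriv

variable (R : Type*) [CommSemiring R] in
noncomputable def lieDerivX0 : Derivation R (MvPolynomial (Fin 2) R) (MvPolynomial (Fin 2) R) :=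
  (X 1 ^ 2 : MvPolynomial (Fin 2) R) • pderiv 0 + (X 0 ^ 2 : MvPolynomial (Fin 2) R) • pderiv 1

variable {R : Type*} [CommSemiring R]

theorem lieDerivX0_apply (F : MvPolynomial (Fin 2) R) :
    lieDerivX0 R F = X 1 ^ 2 * pderiv 0 F + X 0 ^ 2 * pderiv 1 F := rfl

theorem isHomogeneous_lieDerivX0 {F : MvPolynomial (Fin 2) R} {n : ℕ} (hF : F.IsHomogeneous n) :
    (lieDerivX0 R F).IsHomogeneous (n + 1) :=
  (hF.mul_pderiv (isHomogeneous_X_pow 1 2) 0).add (hF.mul_pderiv (isHomogeneous_X_pow 0 2) 1)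

theorem lieDerivX0_homogeneousComponent_eq_zero {F : MvPolynomial (Fin 2) R}
    (hF : lieDerivX0 R F = 0) (d : ℕ) : lieDerivX0 R (homogeneousComponent d F) = 0 := by
  simpa [hF] using (homogeneousComponent_add_map (lieDerivX0 R).toLinearMap
    (fun _ _ h ↦ isHomogeneous_lieDerivX0 h) F d).symm

end LieDeriv

section Dehomogenize

open Polynomial (derivative)

theorem derivative_aeval_X_one {R : Type*} [CommSemiring R] (F : MvPolynomial (Fin 2) R) :
    derivative (aeval ![Polynomial.X, (1 : Polynomial R)] F) =
      aeval ![Polynomial.X, (1 : Polynomial R)] (pderiv 0 F) := by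
  induction F using MvPolynomial.induction_on with
  | C a => simp
  | add p q hp hq => simp only [map_add, hp, hq]
  | mul_X p i hp =>
    fin_cases i
    · simp [hp, Derivation.leibniz, mul_comm]
    · simp [hp, Derivation.leibniz]

theorem IsHomogeneous.derivative_aeval_X_one_of_lieDerivX0_eq_zero {R : Type*} [CommRing R]
    {F : MvPolynomial (Fin 2) R} {n : ℕ} (hF : F.IsHomogeneous n) (hD : lieDerivX0 R F = 0) :
    (Polynomial.X ^ 3 - 1 : Polynomial R) * derivative (MvPolynomial.aeval ![Polynomial.X, 1] F) =
      (n : Polynomial R) * Polynomial.X ^ 2 * MvPolynomial.aeval ![Polynomial.X, 1] F := by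
  have heuler := congrArg (MvPolynomial.aeval ![Polynomial.X, (1 : Polynomial R)])
    hF.sum_X_mul_pderiv
  have hlie := congrArg (MvPolynomial.aeval ![Polynomial.X, (1 : Polynomial R)]) hD
  simp only [Fin.sum_univ_two, lieDerivX0_apply, map_add, map_mul, map_pow, map_zero,
    aeval_X, ← derivative_aeval_X_one, Matrix.cons_val_zero, Matrix.cons_val_one,
    one_pow, one_mul, nsmul_eq_mul, map_natCast] at heuler hlie
  linear_combination Polynomial.X ^ 2 * heuler - hlie

theorem IsHomogeneous.exists_eq_C_mul_pow_of_lieDerivX0_eq_zero {K : Type*} [Field K]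
    [CharZero K] {F : MvPolynomial (Fin 2) K} {n : ℕ} (hF : F.IsHomogeneous n)
    (hD : lieDerivX0 K F = 0) (hF0 : F ≠ 0) :
    ∃ k : ℕ, n = 3 * k ∧ ∃ a : K, F = C a * (X 0 ^ 3 - X 1 ^ 3) ^ k := by
  set p := MvPolynomial.aeval ![Polynomial.X, (1 : Polynomial K)] F
  have hp0 : p ≠ 0 := fun h ↦ hF0 <| by
    rw [← Polynomial.homogenize_eq_of_isHomogeneous hF h, Polynomial.homogenize_zero]
  have hode : (Polynomial.X ^ 3 - 1) * derivative p =
      Polynomial.C ((n : K) / 3) * derivative (Polynomial.X ^ 3 - 1) * p := by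
    rw [Polynomial.derivative_sub, Polynomial.derivative_X_pow, Polynomial.derivative_one,
      sub_zero, ← mul_assoc, ← Polynomial.C_mul, Nat.cast_ofNat, div_mul_cancel₀ _ three_ne_zero,
      map_natCast]
    exact hF.derivative_aeval_X_one_of_lieDerivX0_eq_zero hD
  have hsep : (Polynomial.X ^ 3 - 1 : Polynomial K).Separable := by
    simpa using Polynomial.separable_X_pow_sub_C (1 : K) (n := 3) three_ne_zero one_ne_zero
  obtain ⟨k, hk, a, hpa⟩ := Polynomial.exists_eq_C_mul_pow_of_mul_derivative_eq hsep
    (by rw [← Polynomial.C_1, Polynomial.natDegree_X_pow_sub_C]; norm_num) hp0 hode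
  have hn : n = 3 * k := by
    rw [div_eq_iff three_ne_zero] at hk
    exact_mod_cast hk.trans (mul_comm _ _)
  refine ⟨k, hn, a, ?_⟩
  have hκ : (C a * (X 0 ^ 3 - X 1 ^ 3) ^ k : MvPolynomial (Fin 2) K).IsHomogeneous n := by
    rw [hn]
    exact (((isHomogeneous_X_pow 0 3).sub (isHomogeneous_X_pow 1 3)).pow k).C_mul a
  calc F = p.homogenize n := (Polynomial.homogenize_eq_of_isHomogeneous hF rfl).symm
    _ = _ := Polynomial.homogenize_eq_of_isHomogeneous hκ (by simp [hpa])

end Dehomogenize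

end MvPolynomial

open MvPolynomial

theorem stmt4 :
    (∀ F : MvPolynomial (Fin 2) ℝ,
      X 1 ^ 2 * pderiv 0 F + X 0 ^ 2 * pderiv 1 F = 0 →
      ∃ g : Polynomial ℝ, F = Polynomial.aeval (X 0 ^ 3 - X 1 ^ 3 : MvPolynomial (Fin 2) ℝ) g) ∧
    (∀ (n : ℕ) (F : MvPolynomial (Fin 2) ℝ), F.IsHomogeneous n →
      X 1 ^ 2 * pderiv 0 F + X 0 ^ 2 * pderiv 1 F = 0 → ¬ (3 ∣ n) → F = 0) := by
  simp only [← lieDerivX0_apply]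
  constructor
  · intro F hD
    obtain ⟨g, hg⟩ :
        F ∈ (Polynomial.aeval (R := ℝ) (X 0 ^ 3 - X 1 ^ 3 : MvPolynomial (Fin 2) ℝ)).range := by
      rw [← sum_homogeneousComponent F]
      refine Subalgebra.sum_mem _ fun d _ ↦ ?_
      obtain hF0 | hF0 := eq_or_ne (homogeneousComponent d F) 0
      · exact hF0 ▸ zero_mem _
      obtain ⟨k, -, a, ha⟩ :=
        (homogeneousComponent_isHomogeneous d F).exists_eq_C_mul_pow_of_lieDerivX0_eq_zero
          (lieDerivX0_homogeneousComponent_eq_zero hD d) hF0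
      exact ⟨Polynomial.C a * Polynomial.X ^ k, by simp [ha, MvPolynomial.algebraMap_eq]⟩
    exact ⟨g, hg.symm⟩
  · intro n F hF hD h3
    by_contra hF0
    obtain ⟨k, rfl, -⟩ := hF.exists_eq_C_mul_pow_of_lieDerivX0_eq_zero hD hF0
    exact h3 (dvd_mul_right 3 k)
end

section
/- In the expansion of K(z1,z2,x) = Σᵢ dᵢ/|x + αᵢ z1² + βᵢ z2²| as a power series in (z1, z2) around (0,0) for fixed x > 0, the coefficient of z1^{2i} z2^{2j} for the collinear 4-body coupling potential (with the four sign combinations (α,β) = (c2,−c4), (c2,c3), (−c1,−c4), (−c1,c3) and weights d1 = m1m3, d2 = m1m4, d3 = m2m3, d4 = m2m4, c1 = M1/m2, c2 = M1/m1, c3 = M2/m4, c4 = M2/m3, M1 = m1m2/(m1+m2), M2 = m3m4/(m3+m4)) vanishes for all mixed terms with i ≥ 1, j ≥ 1 and 2i + 2j < 8; i.e. the first coupled monomial is z1⁴z2⁴. -/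
/-- For the collinear 4-body coupling potential, the mixed coefficients
`Σ_k d_k α_k^i β_k^j` of `z1^{2i} z2^{2j}` vanish for all `i ≥ 1`, `j ≥ 1`
with `2i + 2j < 8`: the first coupled monomial is `z1⁴ z2⁴`. -/
theorem stmt18 (m1 m2 m3 m4 : ℝ)
    (hm1 : 0 < m1) (hm2 : 0 < m2) (hm3 : 0 < m3) (hm4 : 0 < m4)
    (M1 M2 d1 d2 d3 d4 c1 c2 c3 c4 : ℝ)
    (hM1 : M1 = m1*m2/(m1+m2)) (hM2 : M2 = m3*m4/(m3+m4))
    (hd1 : d1 = m1*m3) (hd2 : d2 = m1*m4) (hd3 : d3 = m2*m3) (hd4 : d4 = m2*m4)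
    (hc1 : c1 = M1/m2) (hc2 : c2 = M1/m1) (hc3 : c3 = M2/m4) (hc4 : c4 = M2/m3) :
    ∀ i j : ℕ, 1 ≤ i → 1 ≤ j → 2*i + 2*j < 8 →
      d1 * c2^i * (-c4)^j + d2 * c2^i * c3^j
        + d3 * (-c1)^i * (-c4)^j + d4 * (-c1)^i * c3^j = 0 := by
  have h12 : m1 + m2 ≠ 0 := by positivity
  have h34 : m3 + m4 ≠ 0 := by positivity
  intro i j hi hj hij
  subst hM1 hM2 hd1 hd2 hd3 hd4 hc1 hc2 hc3 hc4
  have hiu : i ≤ 2 := by omega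
  have hju : j ≤ 2 := by omega
  interval_cases i <;> interval_cases j <;>
    first
    | omega
    | (field_simp; ring)
end
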